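/- Let d ≥ 3 and let Ω be a nonempty bounded open convex subset of ℝ^d. Let φ : ℝ^d → ℝ^d be twice continuously differentiable on an open set containing the closure of Ω. Suppose that (i) at every x ∈ Ω the Jacobian matrix J(x) = (∂_j φ_i(x))_{ij} has vanishing symmetric trace-free part, i.e. (1/2)(J(x) + J(x)ᵀ) − ((tr J(x))/d)·I = 0, and (ii) φ(x) = 0 for every x in the frontier of Ω. Then φ(x) = 0 for every x ∈ Ω. -/

import Mathlib

/-!
Fix a point of `Ω` and two coordinate directions `i ≠ j`. The vanishing of `stf(Dφ)` gives
`∂ᵢφᵢ = ∂ⱼφⱼ` and `∂ⱼφᵢ = -∂ᵢφⱼ`: restricted to the plane through the point spanned by `eᵢ` and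
`eⱼ`, the function `φᵢ + i φⱼ` satisfies the Cauchy–Riemann equations. On the (bounded) slice of
`Ω` by this plane it is therefore holomorphic, continuous up to the boundary and zero on the
boundary, so it vanishes by the maximum modulus principle.
-/

open Matrix MeasureTheory

/-- The Jacobian matrix `J(x)_{ij} = ∂_j φ_i (x)` of a vector field on `ℝᵈ`. -/
noncomputable def jacobian {d : ℕ}
    (φ : EuclideanSpace ℝ (Fin d) → EuclideanSpace ℝ (Fin d))
    (x : EuclideanSpace ℝ (Fin d)) : Matrix (Fin d) (Fin d) ℝ :=
  Matrix.of fun i j => fderiv ℝ φ x (EuclideanSpace.single j (1 : ℝ)) i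

/-- The symmetric trace-free part `stf(M) = (1/2)(M + Mᵀ) − ((tr M)/d)·I`. -/
noncomputable def stfMat {d : ℕ} (M : Matrix (Fin d) (Fin d) ℝ) :
    Matrix (Fin d) (Fin d) ℝ :=
  ((1 : ℝ) / 2) • (M + Mᵀ) - (M.trace / (d : ℝ)) • (1 : Matrix (Fin d) (Fin d) ℝ)

open Complex Bornology

theorem offDiag_eq_neg_of_stfMat_eq_zero {d : ℕ} {M : Matrix (Fin d) (Fin d) ℝ}
    (hM : stfMat M = 0) {i j : Fin d} (hij : i ≠ j) : M i j = -M j i := by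
  have h := congrFun (congrFun hM i) j
  simp only [stfMat, Matrix.sub_apply, Matrix.smul_apply, Matrix.add_apply,
    Matrix.transpose_apply, Matrix.one_apply_ne hij, smul_eq_mul, Matrix.zero_apply] at h
  linarith

theorem diag_eq_of_stfMat_eq_zero {d : ℕ} {M : Matrix (Fin d) (Fin d) ℝ}
    (hM : stfMat M = 0) (i j : Fin d) : M i i = M j j := by
  have hdiag : ∀ k, M k k = M.trace / d := fun k => by
    have h := congrFun (congrFun hM k) k
    simp only [stfMat, Matrix.sub_apply, Matrix.smul_apply, Matrix.add_apply,
      Matrix.transpose_apply, Matrix.one_apply_eq, smul_eq_mul, Matrix.zero_apply] at h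
    linarith
  rw [hdiag i, hdiag j]

section PlaneSlice

variable {E F : Type*} [NormedAddCommGroup F] [NormedSpace ℝ F]

noncomputable def pairToComplex (p q : F →L[ℝ] ℝ) : F →L[ℝ] ℂ :=
  p.smulRight (1 : ℂ) + q.smulRight I

theorem pairToComplex_apply (p q : F →L[ℝ] ℝ) (y : F) :
    pairToComplex p q y = p y + q y * I := by
  simp [pairToComplex, Complex.real_smul]

theorem pairToComplex_eq_zero_iff {p q : F →L[ℝ] ℝ} {y : F} :
    pairToComplex p q y = 0 ↔ p y = 0 ∧ q y = 0 := by
  simp [pairToComplex_apply, Complex.ext_iff]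

section Normed

variable [NormedAddCommGroup E] [NormedSpace ℝ E]

noncomputable def planeMap (u v : E) : ℂ →L[ℝ] E :=
  reCLM.smulRight u + imCLM.smulRight v

@[simp]
theorem planeMap_apply (u v : E) (z : ℂ) : planeMap u v z = z.re • u + z.im • v := rfl

theorem differentiableAt_pairToComplex_comp_planeMap {φ : E → F} {D : E →L[ℝ] F} {x₀ u v : E}
    {z : ℂ} {p q : F →L[ℝ] ℝ} (hφ : HasFDerivAt φ D (x₀ + planeMap u v z))
    (hre : p (D v) = -q (D u)) (him : q (D v) = p (D u)) :
    DifferentiableAt ℂ (fun w => pairToComplex p q (φ (x₀ + planeMap u v w))) z := by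
  have hf := (pairToComplex p q).hasFDerivAt.comp z
    (hφ.comp z ((planeMap u v).hasFDerivAt.const_add x₀))
  refine (hf.complexOfReal_hasFDerivAt ?_).differentiableAt
  apply Complex.ext <;>
    simp [pairToComplex_apply, hre, him]

end Normed

section Inner

variable [NormedAddCommGroup E] [InnerProductSpace ℝ E]

theorem norm_planeMap {u v : E} (hu : ‖u‖ = 1) (hv : ‖v‖ = 1) (huv : inner ℝ u v = 0)
    (z : ℂ) : ‖planeMap u v z‖ = ‖z‖ := by
  have hsq : ‖planeMap u v z‖ ^ 2 = ‖z‖ ^ 2 := by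
    rw [planeMap_apply, norm_add_sq_real, norm_smul, norm_smul, real_inner_smul_left,
      real_inner_smul_right, huv, hu, hv, Complex.sq_norm, Complex.normSq_apply]
    simp only [Real.norm_eq_abs, mul_one, mul_zero, add_zero, sq_abs]
    ring
  exact (sq_eq_sq₀ (norm_nonneg _) (norm_nonneg _)).mp hsq

theorem antilipschitzWith_add_planeMap {u v : E} (hu : ‖u‖ = 1) (hv : ‖v‖ = 1)
    (huv : inner ℝ u v = 0) (x₀ : E) : AntilipschitzWith 1 (fun z => x₀ + planeMap u v z) :=
  AntilipschitzWith.of_le_mul_dist fun z w => by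
    rw [dist_eq_norm, dist_eq_norm, add_sub_add_left_eq_sub, ← map_sub,
      norm_planeMap hu hv huv, NNReal.coe_one, one_mul]

theorem eq_zero_of_cauchyRiemann_of_frontier {Ω : Set E} (hΩ : IsBounded Ω) {φ : E → F}
    (hφc : ContinuousOn φ (closure Ω)) (hφd : ∀ x ∈ Ω, DifferentiableAt ℝ φ x)
    (hbdry : ∀ x ∈ frontier Ω, φ x = 0) {u v : E} (hu : ‖u‖ = 1) (hv : ‖v‖ = 1)
    (huv : inner ℝ u v = 0) {p q : F →L[ℝ] ℝ}
    (hCR : ∀ x ∈ Ω, p (fderiv ℝ φ x v) = -q (fderiv ℝ φ x u) ∧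
      q (fderiv ℝ φ x v) = p (fderiv ℝ φ x u))
    {x₀ : E} (hx₀ : x₀ ∈ Ω) : p (φ x₀) = 0 ∧ q (φ x₀) = 0 := by
  set ι : ℂ → E := fun z => x₀ + planeMap u v z
  have hι : Continuous ι := continuous_const.add (planeMap u v).continuous
  have hf : DiffContOnCl ℂ (fun z => pairToComplex p q (φ (ι z))) (ι ⁻¹' Ω) :=
    ⟨fun z hz => (differentiableAt_pairToComplex_comp_planeMap (hφd _ hz).hasFDerivAt
        (hCR _ hz).1 (hCR _ hz).2).differentiableWithinAt,
      (pairToComplex p q).continuous.comp_continuousOn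
        (hφc.comp hι.continuousOn fun z hz => hι.closure_preimage_subset Ω hz)⟩
  have hfrontier :
      Set.EqOn (fun z => pairToComplex p q (φ (ι z))) (fun _ => 0) (frontier (ι ⁻¹' Ω)) :=
    fun z hz => by simp [hbdry _ (hι.frontier_preimage_subset Ω hz)]
  have hι0 : ι 0 = x₀ := by simp [ι]
  have h0 := Complex.eqOn_of_eqOn_frontier
    ((antilipschitzWith_add_planeMap hu hv huv x₀).isBounded_preimage hΩ) hf
    diffContOnCl_const hfrontier (show ι 0 ∈ Ω from hι0 ▸ hx₀)
  simpa only [hι0, pairToComplex_eq_zero_iff] using h0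

end Inner

end PlaneSlice

theorem conformal_killing_rigidity_domain_general
    (d : ℕ) (hd : 3 ≤ d)
    (Ω : Set (EuclideanSpace ℝ (Fin d)))
    (hΩbdd : Bornology.IsBounded Ω)
    (φ : EuclideanSpace ℝ (Fin d) → EuclideanSpace ℝ (Fin d))
    (hreg : ∃ U : Set (EuclideanSpace ℝ (Fin d)),
        IsOpen U ∧ closure Ω ⊆ U ∧ ContDiffOn ℝ 2 φ U)
    (hstf : ∀ x ∈ Ω, stfMat (jacobian φ x) = 0)
    (hbdry : ∀ x ∈ frontier Ω, φ x = 0) :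
    ∀ x ∈ Ω, φ x = 0 := by
  obtain ⟨U, hUopen, hΩU, hφ⟩ := hreg
  have hφd : ∀ x ∈ Ω, DifferentiableAt ℝ φ x := fun x hx =>
    (hφ.differentiableOn two_ne_zero).differentiableAt
      (hUopen.mem_nhds (hΩU (subset_closure hx)))
  have : Nontrivial (Fin d) := Fin.nontrivial_iff_two_le.mpr (by omega)
  intro x hx
  ext i
  obtain ⟨j, hji⟩ := exists_ne i
  have h := eq_zero_of_cauchyRiemann_of_frontier hΩbdd (hφ.continuousOn.mono hΩU) hφd hbdry
    (u := EuclideanSpace.single i (1 : ℝ)) (v := EuclideanSpace.single j (1 : ℝ))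
    (by simp) (by simp) (by simp [EuclideanSpace.inner_single_left, hji])
    (p := EuclideanSpace.proj i) (q := EuclideanSpace.proj j)
    (fun y hy => ⟨offDiag_eq_neg_of_stfMat_eq_zero (hstf y hy) hji.symm,
      diag_eq_of_stfMat_eq_zero (hstf y hy) j i⟩) hx
  simpa using h.1

/-- **Rigidity of conformal Killing fields on a bounded convex domain, `d ≥ 3`.**
If `φ` is C² near `closure Ω`, satisfies `stf(Dφ) = 0` on `Ω`, and vanishes on
the boundary `frontier Ω`, then `φ ≡ 0` on `Ω`. -/
theorem conformal_killing_rigidity_domain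
    (d : ℕ) (hd : 3 ≤ d)
    (Ω : Set (EuclideanSpace ℝ (Fin d)))
    (hΩne : Ω.Nonempty) (hΩopen : IsOpen Ω)
    (hΩbdd : Bornology.IsBounded Ω) (hΩconv : Convex ℝ Ω)
    (φ : EuclideanSpace ℝ (Fin d) → EuclideanSpace ℝ (Fin d))
    (hreg : ∃ U : Set (EuclideanSpace ℝ (Fin d)),
        IsOpen U ∧ closure Ω ⊆ U ∧ ContDiffOn ℝ 2 φ U)
    (hstf : ∀ x ∈ Ω, stfMat (jacobian φ x) = 0)
    (hbdry : ∀ x ∈ frontier Ω, φ x = 0) :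
    ∀ x ∈ Ω, φ x = 0 :=
  conformal_killing_rigidity_domain_general d hd Ω hΩbdd φ hreg hstf hbdry
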